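/- Let 𝒜 be a commutative ℝ-algebra, res : 𝒜 → ℝ linear, and D(x,m,y,n) := res((n·x − m·y)²)/(2mn(m+n)) for x,y ∈ 𝒜, m,n > 0. For x₁,x₂,x₃ ∈ 𝒜 and m₁,m₂,m₃ > 0, define δ₃ := D(x₁+x₂, m₁+m₂, x₃, m₃) + D(x₁, m₁, x₂, m₂). Then (m₁+m₂+m₃)·δ₃ = (m₁+m₂)·D(x₁,m₁,x₂,m₂) + (m₁+m₃)·D(x₁,m₁,x₃,m₃) + (m₂+m₃)·D(x₂,m₂,x₃,m₃). -/
import Mathlib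


noncomputable def D {A : Type*} [CommRing A] [Algebra ℝ A] (res : A →ₗ[ℝ] ℝ)
    (x : A) (m : ℝ) (y : A) (n : ℝ) : ℝ :=
  res ((n • x - m • y) ^ 2) / (2 * m * n * (m + n))

lemma res_sq {A : Type*} [CommRing A] [Algebra ℝ A] (res : A →ₗ[ℝ] ℝ)
    (x : A) (m : ℝ) (y : A) (n : ℝ) :
    res ((n • x - m • y) ^ 2)
      = n ^ 2 * res (x * x) - 2 * m * n * res (x * y) + m ^ 2 * res (y * y) := by
  have : (n • x - m • y) ^ 2
      = (n ^ 2) • (x * x) - (2 * m * n) • (x * y) + (m ^ 2) • (y * y) := by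
    simp only [pow_two, sub_mul, mul_sub, smul_mul_assoc, mul_smul_comm, smul_smul,
      mul_comm y x]
    module
  rw [this]
  simp [mul_comm]

theorem stmt15 {A : Type*} [CommRing A] [Algebra ℝ A] (res : A →ₗ[ℝ] ℝ)
    (x₁ x₂ x₃ : A) (m₁ m₂ m₃ : ℝ) (h₁ : 0 < m₁) (h₂ : 0 < m₂) (h₃ : 0 < m₃) :
    (m₁ + m₂ + m₃) * (D res (x₁ + x₂) (m₁ + m₂) x₃ m₃ + D res x₁ m₁ x₂ m₂)
      = (m₁ + m₂) * D res x₁ m₁ x₂ m₂ + (m₁ + m₃) * D res x₁ m₁ x₃ m₃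
        + (m₂ + m₃) * D res x₂ m₂ x₃ m₃ := by
  have e12 : res (((x₁+x₂)*(x₁+x₂))) = res (x₁*x₁) + 2 * res (x₁*x₂) + res (x₂*x₂) := by
    have : (x₁+x₂)*(x₁+x₂) = x₁*x₁ + (2:ℝ) • (x₁*x₂) + x₂*x₂ := by
      simp only [add_mul, mul_add, mul_comm x₂ x₁, two_smul]
      abel
    rw [this]; simp
  have e13 : res ((x₁+x₂)*x₃) = res (x₁*x₃) + res (x₂*x₃) := by
    have : (x₁+x₂)*x₃ = x₁*x₃ + x₂*x₃ := by ring
    rw [this]; simp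
  simp only [D, res_sq, e12, e13]
  field_simp
  ring
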